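/- arXiv:2406.04766 — 3 statements merged into one kernel-verified Lean document; each statement's English description precedes it below -/
import Mathlib

section
/- Let S ≥ 1, and for s = 0,…,S let Λ(s) > 0 be birth rates (Λ(S) plays no role, since there is no acceptance at S) and, for s ≥ 1, let μ(s) > 0 be service rates, with μ(0) = 0. Suppose ρ and h : {0,…,S} → ℝ satisfy, for all s, ρ = R(s) − Λ(s)·∇h(s)·𝟙[s<S] + μ(s)·∇h(s−1)·𝟙[s>0], where ∇h(s) = h(s) − h(s+1). Then for every s ∈ {0,…,S−1}: μ(s+1)·∇h(s) = ∑_{q=s+1}^{S} (ρ − R(q)) · ∏_{p=s+1}^{q−1} Λ(p)/μ(p+1). -/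
lemma sum_Icc_bot {f : ℕ → ℝ} {a b : ℕ} (h : a ≤ b) :
    ∑ q ∈ Finset.Icc a b, f q = f a + ∑ q ∈ Finset.Icc (a + 1) b, f q := by
  rw [Finset.Icc_eq_cons_Ioc h, Finset.sum_cons, Finset.Icc_add_one_left_eq_Ioc]

lemma prod_Icc_bot {f : ℕ → ℝ} {a b : ℕ} (h : a ≤ b) :
    ∏ q ∈ Finset.Icc a b, f q = f a * ∏ q ∈ Finset.Icc (a + 1) b, f q := by
  rw [Finset.Icc_eq_cons_Ioc h, Finset.prod_cons, Finset.Icc_add_one_left_eq_Ioc]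

/-- Closed-form expression for the relative bias of a birth-and-death process
on states {0,…,S} satisfying the evaluation equations. -/
theorem relative_bias_closed_form
    (S : ℕ) (hS : 1 ≤ S)
    (Λ μ R h : ℕ → ℝ) (ρ : ℝ)
    (hΛ : ∀ s < S, 0 < Λ s)
    (hμ : ∀ s, 1 ≤ s → s ≤ S → 0 < μ s) (hμ0 : μ 0 = 0)
    (heval : ∀ s ≤ S,
      ρ = R s - (if s < S then Λ s * (h s - h (s + 1)) else 0)
            + (if 0 < s then μ s * (h (s - 1) - h s) else 0)) :
    ∀ s < S,
      μ (s + 1) * (h s - h (s + 1)) =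
        ∑ q ∈ Finset.Icc (s + 1) S,
          (ρ - R q) * ∏ p ∈ Finset.Icc (s + 1) (q - 1), Λ p / μ (p + 1) := by
  have key : ∀ d s, s + 1 + d = S →
      μ (s + 1) * (h s - h (s + 1)) =
        ∑ q ∈ Finset.Icc (s + 1) S,
          (ρ - R q) * ∏ p ∈ Finset.Icc (s + 1) (q - 1), Λ p / μ (p + 1) := by
    intro d
    induction d with
    | zero =>
      intro s hs
      have hSs : S = s + 1 := by omega
      subst hSs
      have he := heval (s + 1) le_rfl
      rw [if_neg (by omega), if_pos (by omega)] at he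
      simp only [Nat.add_sub_cancel] at he
      rw [Finset.Icc_self, Finset.sum_singleton]
      have : Finset.Icc (s + 1) (s + 1 - 1) = ∅ := by
        apply Finset.Icc_eq_empty; omega
      rw [this, Finset.prod_empty]
      linarith
    | succ d ih =>
      intro s hs
      have hS2 : s + 2 ≤ S := by omega
      have hrec := ih (s + 1) (by omega)
      have he := heval (s + 1) (by omega)
      rw [if_pos (by omega), if_pos (by omega)] at he
      simp only [Nat.add_sub_cancel] at he
      have hμ2 : 0 < μ (s + 2) := hμ _ (by omega) (by omega)
      rw [sum_Icc_bot (by omega : s + 1 ≤ S)]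
      have hemp : Finset.Icc (s + 1) (s + 1 - 1) = ∅ := by
        apply Finset.Icc_eq_empty; omega
      rw [hemp, Finset.prod_empty]
      have hsum : ∑ q ∈ Finset.Icc (s + 2) S,
          (ρ - R q) * ∏ p ∈ Finset.Icc (s + 1) (q - 1), Λ p / μ (p + 1)
          = (Λ (s + 1) / μ (s + 2)) * ∑ q ∈ Finset.Icc (s + 2) S,
          (ρ - R q) * ∏ p ∈ Finset.Icc (s + 2) (q - 1), Λ p / μ (p + 1) := by
        rw [Finset.mul_sum]
        apply Finset.sum_congr rfl
        intro q hq
        rw [Finset.mem_Icc] at hq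
        have h1 : s + 1 ≤ q - 1 := by omega
        rw [prod_Icc_bot h1]
        have : q - 1 + 1 = q := by omega
        ring
      rw [hsum, ← hrec]
      have hne : μ (s + 2) ≠ 0 := ne_of_gt hμ2
      have hdiv : Λ (s + 1) / μ (s + 2) * (μ (s + 1 + 1) * (h (s + 1) - h (s + 1 + 1)))
          = Λ (s + 1) * (h (s + 1) - h (s + 1 + 1)) := by
        rw [show s + 1 + 1 = s + 2 by omega]
        field_simp
      rw [hdiv]
      linarith
  intro s hsS
  exact key (S - (s + 1)) s (by omega)
end

section
/- Consider the M/M/1/S birth-and-death MDP with arrival rate Λ > 0, service rate μ > 0, μ ≠ Λ, uniformization constant U = Λ + μ. The expected hitting time of state S from state S−1 under the accept-all policy (hence the MDP diameter D) satisfies D ≥ (μ/(Λ+μ)) · ((μ/Λ)^S − 1)/((μ/Λ) − 1). -/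
/-- Diameter lower bound for the M/M/1/S queue: if τ(s) denotes the expected hitting
time of state S from state s in the uniformized chain (U = Λ + μ) under the accept-all
policy, then the diameter D ≥ τ(S−1) ≥ (μ/(Λ+μ))·((μ/Λ)^S − 1)/((μ/Λ) − 1). -/
theorem mm1s_diameter_lower_bound (S : ℕ) (hS : 1 ≤ S) (Λ μ : ℝ)
    (hΛ : 0 < Λ) (hμ : 0 < μ) (hne : μ ≠ Λ)
    (τ : ℕ → ℝ) (hτS : τ S = 0) (hτnn : ∀ s, 0 ≤ τ s)
    (hrec : ∀ s < S,
      τ s = 1 + Λ / (Λ + μ) * τ (s + 1)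
              + (if 0 < s then μ / (Λ + μ) * τ (s - 1) else 0)
              + (1 - Λ / (Λ + μ) - (if 0 < s then μ / (Λ + μ) else 0)) * τ s) :
    μ / (Λ + μ) * (((μ / Λ) ^ S - 1) / (μ / Λ - 1)) ≤ τ (S - 1) := by
  have hU : (0:ℝ) < Λ + μ := by linarith
  have hUne : (Λ + μ) ≠ 0 := ne_of_gt hU
  have hΛne : Λ ≠ 0 := ne_of_gt hΛ
  have hrne1 : μ / Λ ≠ 1 := by
    intro h; apply hne; field_simp at h; exact h
  have key : ∀ s, s < S → τ s - τ (s+1)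
      = (Λ+μ)/Λ * ∑ k ∈ Finset.range (s+1), (μ/Λ) ^ k := by
    intro s
    induction s with
    | zero =>
      intro h0
      have h := hrec 0 h0
      simp only [if_neg (lt_irrefl 0)] at h
      rw [Finset.range_one, Finset.sum_singleton, pow_zero, mul_one]
      field_simp at h ⊢
      linarith
    | succ n ih =>
      intro h1
      have h := hrec (n+1) h1
      have ihn := ih (by omega)
      simp only [if_pos (Nat.succ_pos n), Nat.add_sub_cancel,
        show n+1+1 = n+2 from rfl] at h
      rw [geom_sum_succ]
      have e : τ (n+1) - τ (n+2) = (Λ+μ)/Λ + μ/Λ * (τ n - τ (n+1)) := by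
        field_simp at h ⊢
        linear_combination h
      rw [e, ihn]
      ring
  obtain ⟨m, rfl⟩ : ∃ m, S = m + 1 := ⟨S - 1, by omega⟩
  have hk := key m (Nat.lt_succ_self m)
  rw [hτS, sub_zero, geom_sum_eq hrne1] at hk
  simp only [Nat.add_sub_cancel]
  rw [hk]
  set X := ((μ/Λ) ^ (m+1) - 1) / (μ/Λ - 1) with hX
  have hr0 : (0:ℝ) < μ / Λ := div_pos hμ hΛ
  have hXpos : 0 < X := by
    rcases lt_or_gt_of_ne hrne1 with h | h
    · apply div_pos_of_neg_of_neg
      · have : (μ/Λ) ^ (m+1) < 1 := pow_lt_one₀ (le_of_lt hr0) h (Nat.succ_ne_zero m)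
        linarith
      · linarith
    · apply div_pos
      · have : 1 < (μ/Λ) ^ (m+1) := one_lt_pow₀ h (Nat.succ_ne_zero m)
        linarith
      · linarith
  have hcoef : μ / (Λ + μ) ≤ (Λ + μ) / Λ := by
    rw [div_le_div_iff₀ hU hΛ]
    nlinarith
  exact mul_le_mul_of_nonneg_right hcoef (le_of_lt hXpos)
end

section
/- Fix a state s and rewards r^{(1)}(s) ≥ r^{(2)}(s) ≥ … ≥ r^{(m)}(s). Let p and p̃ be probability vectors on {1,…,m} and k an index such that p̃^{(j)} ≥ p^{(j)} for all j ≤ k and p̃^{(j)} ≤ p^{(j)} for all j > k. For any acceptance probabilities π(j) ∈ [0,1], define π̃(j) = π(j) for j > k and π̃(j) = (p^{(j)}/p̃^{(j)})π(j) + (1 − p^{(j)}/p̃^{(j)})·∑_{y>k} ((p^{(y)} − p̃^{(y)})/∑_{t>k}(p^{(t)} − p̃^{(t)}))·π(y) for j ≤ k (with the convention that the second term vanishes if ∑_{t>k}(p^{(t)} − p̃^{(t)}) = 0). Then (i) ∑_i p̃^{(i)} π̃(i) = ∑_i p^{(i)} π(i), and (ii) ∑_i p̃^{(i)} π̃(i)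 r^{(i)}(s) ≥ ∑_i p^{(i)} π(i) r^{(i)}(s). -/
/-- Policy coupling: shifting arrival probability mass toward higher-reward classes
(p̃ ≥ p on classes below the cut k, p̃ ≤ p above) can be compensated by a modified
acceptance policy π̃ keeping the total acceptance probability unchanged while not
decreasing the expected reward. -/
theorem policy_coupling (m k : ℕ) (r : Fin m → ℝ)
    (hr : ∀ i j : Fin m, i ≤ j → r j ≤ r i)
    (p ptilde : Fin m → ℝ)
    (hp : ∀ i, 0 ≤ p i) (hpsum : ∑ i, p i = 1)
    (hpt : ∀ i, 0 ≤ ptilde i) (hptsum : ∑ i, ptilde i = 1)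
    (hlow : ∀ j : Fin m, (j : ℕ) < k → p j ≤ ptilde j)
    (hhigh : ∀ j : Fin m, k ≤ (j : ℕ) → ptilde j ≤ p j)
    (π : Fin m → ℝ) (hπ : ∀ i, π i ∈ Set.Icc (0 : ℝ) 1)
    (D : ℝ) (hD : D = ∑ t ∈ Finset.univ.filter (fun t : Fin m => k ≤ (t : ℕ)), (p t - ptilde t))
    (πtilde : Fin m → ℝ)
    (hπt : ∀ j : Fin m, πtilde j =
      if (j : ℕ) < k then
        p j / ptilde j * π j +
          (if D = 0 then 0 else
            (1 - p j / ptilde j) *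
              ∑ y ∈ Finset.univ.filter (fun y : Fin m => k ≤ (y : ℕ)),
                (p y - ptilde y) / D * π y)
      else π j) :
    (∑ i, ptilde i * πtilde i = ∑ i, p i * π i) ∧
    (∑ i, p i * π i * r i ≤ ∑ i, ptilde i * πtilde i * r i) := by

  set L := Finset.univ.filter (fun j : Fin m => (j : ℕ) < k) with hL
  set H := Finset.univ.filter (fun j : Fin m => k ≤ (j : ℕ)) with hH
  have hLH : ∀ f : Fin m → ℝ, ∑ i ∈ L, f i + ∑ i ∈ H, f i = ∑ i, f i := by
    intro f
    have hHeq' : Finset.filter (fun j : Fin m => ¬ (j : ℕ) < k) Finset.univ = H := by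
      rw [hH]
      apply Finset.filter_congr
      intro x _
      simp [not_lt]
    rw [← Finset.sum_filter_add_sum_filter_not Finset.univ (fun j : Fin m => (j : ℕ) < k) f,
      hHeq']
  have hsum0 : ∑ i, (ptilde i - p i) = 0 := by
    rw [Finset.sum_sub_distrib, hpsum, hptsum]; ring
  have hHneg : ∑ i ∈ H, (ptilde i - p i) = -D := by
    rw [hD, ← Finset.sum_neg_distrib]
    exact Finset.sum_congr rfl (fun x _ => by ring)
  have hDL : ∑ j ∈ L, (ptilde j - p j) = D := by
    have := hLH (fun i => ptilde i - p i)
    linarith [hsum0, hHneg]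
  have hD0 : 0 ≤ D := by
    rw [hD]
    apply Finset.sum_nonneg
    intro t ht
    have hk := (Finset.mem_filter.mp ht).2
    linarith [hhigh t hk]
  by_cases hDz : D = 0
  · -- degenerate case: p = ptilde everywhere
    have hHeq : ∀ t ∈ H, p t - ptilde t = 0 := by
      rw [← Finset.sum_eq_zero_iff_of_nonneg]
      · rw [← hD]; exact hDz
      · intro t ht
        have hk := (Finset.mem_filter.mp ht).2
        linarith [hhigh t hk]
    have hLeq : ∀ t ∈ L, ptilde t - p t = 0 := by
      rw [← Finset.sum_eq_zero_iff_of_nonneg]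
      · rw [hDL]; exact hDz
      · intro t ht
        have hk := (Finset.mem_filter.mp ht).2
        linarith [hlow t hk]
    have heq : ∀ i, p i = ptilde i := by
      intro i
      by_cases h : (i : ℕ) < k
      · have := hLeq i (by simp [hL, h]); linarith
      · have := hHeq i (by simp [hH, not_lt.mp h]); linarith
    have hpt2 : ∀ i, ptilde i * πtilde i = p i * π i := by
      intro i
      rw [hπt i]
      by_cases h : (i : ℕ) < k
      · simp only [if_pos h, if_pos hDz, add_zero]
        rw [← heq i]
        rcases eq_or_ne (p i) 0 with h0 | h0
        · simp [h0]
        · field_simp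
      · simp only [if_neg h]
        rw [heq i]
    constructor
    · exact Finset.sum_congr rfl (fun i _ => hpt2 i)
    · apply le_of_eq
      apply Finset.sum_congr rfl
      intro i _
      rw [hpt2 i]
  · -- main case: D > 0
    have hDpos : 0 < D := lt_of_le_of_ne hD0 (Ne.symm hDz)
    set A := ∑ y ∈ H, (p y - ptilde y) / D * π y with hA
    set B : Fin m → ℝ := fun i => if (i : ℕ) < k then A else π i with hB
    have key : ∀ i, ptilde i * πtilde i = p i * π i + (ptilde i - p i) * B i := by
      intro i
      rw [hπt i, hB]
      by_cases h : (i : ℕ) < k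
      · simp only [if_pos h, if_neg hDz]
        rcases eq_or_ne (ptilde i) 0 with h0 | h0
        · have hp0 : p i = 0 := le_antisymm (h0 ▸ hlow i h) (hp i)
          simp [h0, hp0]
        · field_simp
          try ring
      · simp only [if_neg h]
        ring
    set SC := ∑ y ∈ H, (p y - ptilde y) * π y with hSC
    have hASC : A = SC / D := by
      rw [hA, hSC, Finset.sum_div]
      exact Finset.sum_congr rfl (fun y _ => by ring)
    -- part (i)
    have part1 : ∑ i, ptilde i * πtilde i = ∑ i, p i * π i := by
      have h1 : ∑ i, ptilde i * πtilde i
          = ∑ i, p i * π i + ∑ i, (ptilde i - p i) * B i := by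
        rw [← Finset.sum_add_distrib]
        exact Finset.sum_congr rfl (fun i _ => key i)
      have h2 : ∑ i, (ptilde i - p i) * B i
          = (∑ j ∈ L, (ptilde j - p j)) * A + ∑ y ∈ H, (ptilde y - p y) * π y := by
        rw [← hLH (fun i => (ptilde i - p i) * B i), Finset.sum_mul]
        congr 1
        · apply Finset.sum_congr rfl
          intro j hj
          have hk := (Finset.mem_filter.mp hj).2
          simp [hB, hk]
        · apply Finset.sum_congr rfl
          intro y hy
          have hk := (Finset.mem_filter.mp hy).2
          simp [hB, Nat.not_lt.mpr hk]
      have h3 : ∑ y ∈ H, (ptilde y - p y) * π y = -SC := by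
        rw [hSC, ← Finset.sum_neg_distrib]
        exact Finset.sum_congr rfl (fun y _ => by ring)
      have h4 : (∑ j ∈ L, (ptilde j - p j)) * A = SC := by
        rw [hDL, hASC]
        field_simp
      rw [h1, h2, h3, h4]
      ring
    refine ⟨part1, ?_⟩
    -- part (ii)
    set SL := ∑ j ∈ L, (ptilde j - p j) * r j with hSL
    set SCR := ∑ y ∈ H, (p y - ptilde y) * π y * r y with hSCR
    have h1 : ∑ i, ptilde i * πtilde i * r i
        = ∑ i, p i * π i * r i + ∑ i, (ptilde i - p i) * B i * r i := by
      rw [← Finset.sum_add_distrib]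
      apply Finset.sum_congr rfl
      intro i _
      rw [key i]
      ring
    have h2 : ∑ i, (ptilde i - p i) * B i * r i = SL * A - SCR := by
      rw [← hLH (fun i => (ptilde i - p i) * B i * r i)]
      have hLpart : ∑ i ∈ L, (ptilde i - p i) * B i * r i = SL * A := by
        rw [hSL, Finset.sum_mul]
        apply Finset.sum_congr rfl
        intro j hj
        have hk := (Finset.mem_filter.mp hj).2
        simp only [hB, if_pos hk]
        ring
      have hHpart : ∑ i ∈ H, (ptilde i - p i) * B i * r i = -SCR := by
        rw [hSCR, ← Finset.sum_neg_distrib]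
        apply Finset.sum_congr rfl
        intro y hy
        have hk := (Finset.mem_filter.mp hy).2
        simp only [hB, if_neg (Nat.not_lt.mpr hk)]
        ring
      rw [hLpart, hHpart]
      ring
    have hmain : D * SCR ≤ SL * SC := by
      nth_rewrite 1 [← hDL]
      rw [hSCR, hSL, hSC, Finset.sum_mul_sum, Finset.sum_mul_sum]
      apply Finset.sum_le_sum
      intro j hj
      apply Finset.sum_le_sum
      intro y hy
      have hjk := (Finset.mem_filter.mp hj).2
      have hky := (Finset.mem_filter.mp hy).2
      have hjy : j ≤ y := by
        rw [Fin.le_def]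
        omega
      have hry := hr j y hjy
      have hw : 0 ≤ ptilde j - p j := by linarith [hlow j hjk]
      have hc : 0 ≤ (p y - ptilde y) * π y :=
        mul_nonneg (by linarith [hhigh y hky]) (hπ y).1
      nlinarith [mul_le_mul_of_nonneg_left hry (mul_nonneg hw hc)]
    have hfin : SCR ≤ SL * A := by
      rw [hASC, ← mul_div_assoc, le_div_iff₀ hDpos]
      linarith [hmain]
    rw [h1, h2]
    linarith
end
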